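/- Let (V, μ, α) be a multiplicative Hom-Jordan algebra over a field F. If D₁ is an α^k-central derivation of V and D₂ is an α^s-derivation of V (k, s ≥ 0), then α ∘ D₁ is an α^(k+1)-central derivation of V and the commutator [D₁, D₂] = D₁ ∘ D₂ − D₂ ∘ D₁ is an α^(k+s)-central derivation of V. -/
import Mathlib


/-- `D` is an `α^k`-derivation of the Hom-Jordan algebra `(V, μ, α)`. -/
def IsDer {F V : Type*} [Field F] [AddCommGroup V] [Module F V]
    (μ : V →ₗ[F] V →ₗ[F] V) (α : V →ₗ[F] V) (k : ℕ) (D : V →ₗ[F] V) : Prop :=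
  D ∘ₗ α = α ∘ₗ D ∧
    ∀ x y : V, D (μ x y) = μ (D x) ((α ^ k) y) + μ ((α ^ k) x) (D y)

/-- `D` is an `α^k`-central derivation of the Hom-Jordan algebra `(V, μ, α)`. -/
def IsZDer {F V : Type*} [Field F] [AddCommGroup V] [Module F V]
    (μ : V →ₗ[F] V →ₗ[F] V) (α : V →ₗ[F] V) (k : ℕ) (D : V →ₗ[F] V) : Prop :=
  D ∘ₗ α = α ∘ₗ D ∧ ∀ x y : V,
    μ (D x) ((α ^ k) y) = 0 ∧ D (μ x y) = 0

lemma comm_pow {F V : Type*} [Field F] [AddCommGroup V] [Module F V]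
    {α D : V →ₗ[F] V} (h : D ∘ₗ α = α ∘ₗ D) (n : ℕ) (x : V) :
    D ((α ^ n) x) = (α ^ n) (D x) := by
  induction n generalizing x with
  | zero => simp
  | succ m ih =>
      have h' : ∀ z, D (α z) = α (D z) := fun z => LinearMap.congr_fun h z
      simp only [pow_succ, Module.End.mul_apply]
      rw [ih, h']

theorem stmt3 {F V : Type*} [Field F] [AddCommGroup V] [Module F V]
    (μ : V →ₗ[F] V →ₗ[F] V) (α : V →ₗ[F] V)
    (hcomm : ∀ x y : V, μ x y = μ y x)
    (hJ : ∀ x y : V, μ (α (α x)) (μ y (μ x x)) = μ (μ (α x) y) (α (μ x x)))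
    (hmult : ∀ x y : V, α (μ x y) = μ (α x) (α y))
    (k s : ℕ) (D₁ D₂ : V →ₗ[F] V)
    (h₁ : IsZDer μ α k D₁) (h₂ : IsDer μ α s D₂) :
    IsZDer μ α (k + 1) (α ∘ₗ D₁) ∧
    IsZDer μ α (k + s) (D₁ ∘ₗ D₂ - D₂ ∘ₗ D₁) := by
  obtain ⟨hc1, hz⟩ := h₁
  obtain ⟨hc2, hd⟩ := h₂
  have hz1 : ∀ x y : V, μ (D₁ x) ((α ^ k) y) = 0 := fun x y => (hz x y).1
  have hz2 : ∀ x y : V, D₁ (μ x y) = 0 := fun x y => (hz x y).2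
  constructor
  · constructor
    · rw [LinearMap.comp_assoc, hc1, ← LinearMap.comp_assoc]
    · intro x y
      constructor
      · have : ((α ^ (k + 1)) y) = α ((α ^ k) y) := by
          rw [pow_succ']; rfl
        simp only [LinearMap.comp_apply, this, ← hmult, hz1, map_zero]
      · simp [LinearMap.comp_apply, hz2]
  · constructor
    · have e1 : ∀ z, D₁ (α z) = α (D₁ z) := fun z => LinearMap.congr_fun hc1 z
      have e2 : ∀ z, D₂ (α z) = α (D₂ z) := fun z => LinearMap.congr_fun hc2 z
      ext x
      simp only [LinearMap.comp_apply, LinearMap.sub_apply, map_sub, e1, e2]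
    · intro x y
      constructor
      · have t1 : μ (D₁ (D₂ x)) ((α ^ (k + s)) y) = 0 := by
          have : (α ^ (k + s)) y = (α ^ k) ((α ^ s) y) := by
            rw [pow_add]; rfl
          rw [this, hz1]
        have t2 : μ (D₂ (D₁ x)) ((α ^ (k + s)) y) = 0 := by
          have key := hd (D₁ x) ((α ^ k) y)
          rw [hz1, map_zero] at key
          have e : (α ^ s) (D₁ x) = D₁ ((α ^ s) x) := (comm_pow hc1 s x).symm
          have e' : D₂ ((α ^ k) y) = (α ^ k) (D₂ y) := comm_pow hc2 k y
          rw [e, e', hz1, add_zero] at key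
          have : (α ^ (k + s)) y = (α ^ s) ((α ^ k) y) := by
            rw [add_comm, pow_add]; rfl
          rw [this, ← key]
        simp only [LinearMap.sub_apply, LinearMap.comp_apply, map_sub,
          LinearMap.sub_apply] at *
        rw [t1, t2, sub_zero]
      · have d2 : D₂ (μ x y) = μ (D₂ x) ((α ^ s) y) + μ ((α ^ s) x) (D₂ y) := hd x y
        simp [LinearMap.sub_apply, LinearMap.comp_apply, d2, hz2]
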